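/- Let f : [a,b] → ℝ be regulated and g : [a,b] → ℝ be regulated and of bounded variation. Then both the Kurzweil–Stieltjes integral (K)∫_a^b f dg and the Dushnik integral (D)∫_a^b g df exist, and (K)∫_a^b f dg = f(b)g(b) − f(a)g(a) − (D)∫_a^b g df. -/

import Mathlib

open Set Filter

/-- A tagged partition of `[a,b]`: points `a = pts 0 < pts 1 < … < pts n = b`
with tags `tag j ∈ [pts j, pts (j+1)]`. -/
structure TaggedPartition (a b : ℝ) where
  n : ℕ
  pts : ℕ → ℝ
  tag : ℕ → ℝ
  n_pos : 0 < n
  pts_zero : pts 0 = a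
  pts_last : pts n = b
  pts_mono : ∀ j < n, pts j < pts (j + 1)
  tag_mem : ∀ j < n, tag j ∈ Set.Icc (pts j) (pts (j + 1))

/-- Riemann–Stieltjes sum `S(f, dg, P)`. -/
def RS (f g : ℝ → ℝ) {a b : ℝ} (P : TaggedPartition a b) : ℝ :=
  ∑ j ∈ Finset.range P.n, f (P.tag j) * (g (P.pts (j + 1)) - g (P.pts j))

/-- `P` is `δ`-fine. -/
def IsFine (δ : ℝ → ℝ) {a b : ℝ} (P : TaggedPartition a b) : Prop :=
  ∀ j < P.n, Set.Icc (P.pts j) (P.pts (j + 1)) ⊆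
    Set.Icc (P.tag j - δ (P.tag j)) (P.tag j + δ (P.tag j))

/-- The Kurzweil–Stieltjes integral `(K)∫_a^b f dg` exists and equals `I`. -/
def HasKS (f g : ℝ → ℝ) (a b I : ℝ) : Prop :=
  ∀ ε > 0, ∃ δ : ℝ → ℝ, (∀ t ∈ Set.Icc a b, 0 < δ t ∧ δ t < 1) ∧
    ∀ P : TaggedPartition a b, IsFine δ P → |RS f g P - I| < ε

/-- The division of `P` contains all points of the finite set `D`. -/
def Refines {a b : ℝ} (P : TaggedPartition a b) (D : Finset ℝ) : Prop :=
  ∀ x ∈ D, ∃ j ≤ P.n, P.pts j = x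

/-- All tags of `P` lie strictly inside the corresponding subintervals. -/
def InteriorTags {a b : ℝ} (P : TaggedPartition a b) : Prop :=
  ∀ j < P.n, P.pts j < P.tag j ∧ P.tag j < P.pts (j + 1)

/-- The Dushnik integral `(D)∫_a^b f dg` exists and equals `I`. -/
def HasDushnik (f g : ℝ → ℝ) (a b I : ℝ) : Prop :=
  ∀ ε > 0, ∃ D : Finset ℝ, ↑D ⊆ Set.Icc a b ∧
    ∀ P : TaggedPartition a b, Refines P D → InteriorTags P → |RS f g P - I| < ε

/-- `f` is regulated on `[a,b]`: it has finite one-sided limits (within `[a,b]`)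
at every point where they make sense. -/
def Regulated (f : ℝ → ℝ) (a b : ℝ) : Prop :=
  (∀ t ∈ Set.Ioc a b, ∃ L : ℝ, Filter.Tendsto f (nhdsWithin t (Set.Ico a t)) (nhds L)) ∧
  (∀ t ∈ Set.Ico a b, ∃ L : ℝ, Filter.Tendsto f (nhdsWithin t (Set.Ioc t b)) (nhds L))

/-- The Young sum `S_Y(f, dg, P)`, where `gl t = g(t-)` and `gr t = g(t+)`
are the one-sided limit functions of `g`. -/
def YS (f gl gr g : ℝ → ℝ) {a b : ℝ} (P : TaggedPartition a b) : ℝ :=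
  ∑ j ∈ Finset.range P.n,
    (f (P.pts j) * (gr (P.pts j) - g (P.pts j))
      + f (P.tag j) * (gl (P.pts (j + 1)) - gr (P.pts j))
      + f (P.pts (j + 1)) * (g (P.pts (j + 1)) - gl (P.pts (j + 1))))

/-- The Young integral `(Y)∫_a^b f dg` exists and equals `I` (here `gl`, `gr`
are the one-sided limit functions of `g`). -/
def HasYoung (f gl gr g : ℝ → ℝ) (a b I : ℝ) : Prop :=
  ∀ ε > 0, ∃ D : Finset ℝ, ↑D ⊆ Set.Icc a b ∧
    ∀ P : TaggedPartition a b, Refines P D → InteriorTags P → |YS f gl gr g P - I| < ε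

/-- `f` is a finite step function on `[a,b]`: constant on the open subintervals
of some division `a = σ 0 < … < σ m = b`. -/
def IsStepFunction (f : ℝ → ℝ) (a b : ℝ) : Prop :=
  ∃ (m : ℕ) (σ : ℕ → ℝ), 0 < m ∧ σ 0 = a ∧ σ m = b ∧ (∀ k < m, σ k < σ (k + 1)) ∧
    ∀ k < m, ∀ x ∈ Set.Ioo (σ k) (σ (k + 1)), ∀ y ∈ Set.Ioo (σ k) (σ (k + 1)), f x = f y

/-- The (real-valued) total variation of `g` on `[a,b]`. -/
noncomputable def var (g : ℝ → ℝ) (a b : ℝ) : ℝ :=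
  (eVariationOn g (Set.Icc a b)).toReal

/-!
Both integrals are limits of Riemann–Stieltjes sums along filters of tagged partitions, and both
depend linearly on `f`. Uniformly on all partitions, the sums for `f dg` are bounded by
`sup |f| · var g`, and, after a summation by parts, those for `g df` by
`sup |f| · (|g a| + |g b| + var g)`. Hence the `f` satisfying the formula form a linear subspace
that is closed under uniform limits on `[a,b]`. The formula holds for the indicators of `(c, ∞)`
and `[c, ∞)`: for a fine (resp. refining) partition both sums reduce to a value of `g` just beside
`c`, so they converge to a one-sided limit of `g` at `c`. A regulated `f` is a uniform limit of
linear combinations of these indicators.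
-/

open Topology

namespace TaggedPartition

section Order

variable {a b : ℝ} (P : TaggedPartition a b)

lemma pts_strictMonoOn : StrictMonoOn P.pts (Iic P.n) :=
  strictMonoOn_Iic_of_lt_succ fun j hj => by simpa using P.pts_mono j hj

lemma pts_lt_pts_iff {i j : ℕ} (hi : i ≤ P.n) (hj : j ≤ P.n) : P.pts i < P.pts j ↔ i < j :=
  P.pts_strictMonoOn.lt_iff_lt hi hj

lemma pts_le_pts_iff {i j : ℕ} (hi : i ≤ P.n) (hj : j ≤ P.n) : P.pts i ≤ P.pts j ↔ i ≤ j :=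
  P.pts_strictMonoOn.le_iff_le hi hj

lemma pts_le {i j : ℕ} (hij : i ≤ j) (hj : j ≤ P.n) : P.pts i ≤ P.pts j :=
  (P.pts_le_pts_iff (hij.trans hj) hj).2 hij

lemma pts_le_tag {i j : ℕ} (hij : i ≤ j) (hj : j < P.n) : P.pts i ≤ P.tag j :=
  (P.pts_le hij hj.le).trans (P.tag_mem j hj).1

lemma tag_le_pts {i j : ℕ} (hij : i < j) (hj : j ≤ P.n) : P.tag i ≤ P.pts j :=
  (P.tag_mem i (hij.trans_le hj)).2.trans (P.pts_le hij hj)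

lemma tag_le_tag {i j : ℕ} (hij : i ≤ j) (hj : j < P.n) : P.tag i ≤ P.tag j := by
  rcases hij.eq_or_lt with rfl | hlt
  · exact le_rfl
  · exact (P.tag_le_pts hlt hj.le).trans (P.tag_mem j hj).1

lemma left_lt_right (P : TaggedPartition a b) : a < b := by
  simpa [P.pts_zero, P.pts_last] using (P.pts_lt_pts_iff (Nat.zero_le _) le_rfl).2 P.n_pos

lemma pts_mem {j : ℕ} (hj : j ≤ P.n) : P.pts j ∈ Icc a b := by
  have h0 := P.pts_le (Nat.zero_le j) hj
  have hn := P.pts_le hj le_rfl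
  rw [P.pts_zero] at h0
  rw [P.pts_last] at hn
  exact ⟨h0, hn⟩

lemma tag_mem_Icc {j : ℕ} (hj : j < P.n) : P.tag j ∈ Icc a b :=
  ⟨(P.pts_mem hj.le).1.trans (P.tag_mem j hj).1, (P.tag_mem j hj).2.trans (P.pts_mem hj).2⟩

lemma sum_sub_pts (F : ℝ → ℝ) :
    ∑ j ∈ Finset.range P.n, (F (P.pts (j + 1)) - F (P.pts j)) = F b - F a := by
  rw [Finset.sum_range_sub (fun j => F (P.pts j)), P.pts_last, P.pts_zero]

lemma exists_pts_le_lt {x : ℝ} (hx : x ∈ Ico a b) :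
    ∃ p < P.n, P.pts p ≤ x ∧ x < P.pts (p + 1) := by
  have h0 : P.pts 0 ≤ x := by rw [P.pts_zero]; exact hx.1
  set p := Nat.findGreatest (fun j => P.pts j ≤ x) P.n
  have hp : P.pts p ≤ x := Nat.findGreatest_spec (P := fun j => P.pts j ≤ x) (Nat.zero_le _) h0
  have hpn : p < P.n := by
    refine (Nat.findGreatest_le P.n).lt_of_ne fun h => hx.2.not_ge ?_
    rw [← P.pts_last, ← h]
    exact hp
  exact ⟨p, hpn, hp, not_le.1 (Nat.findGreatest_is_greatest (Nat.lt_succ_self p) hpn)⟩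

lemma exists_pts_lt_le {x : ℝ} (hx : x ∈ Ioc a b) :
    ∃ p < P.n, P.pts p < x ∧ x ≤ P.pts (p + 1) := by
  have hxn : x ≤ P.pts P.n := by rw [P.pts_last]; exact hx.2
  have hex : ∃ j, x ≤ P.pts j := ⟨P.n, hxn⟩
  obtain ⟨p, hp⟩ : ∃ p, Nat.find hex = p + 1 :=
    Nat.exists_eq_succ_of_ne_zero fun h => by
      have := Nat.find_spec hex
      rw [h, P.pts_zero] at this
      exact hx.1.not_ge this
  have hpn : p < P.n := by
    have := Nat.find_min' hex hxn
    omega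
  have hxp := Nat.find_spec hex
  rw [hp] at hxp
  exact ⟨p, hpn, not_le.1 (Nat.find_min hex (by omega)), hxp⟩

lemma pts_notMem_Ioo {i j : ℕ} (hi : i ≤ P.n) (hj : j < P.n) :
    P.pts i ∉ Ioo (P.pts j) (P.pts (j + 1)) := fun h => by
  have h1 := (P.pts_lt_pts_iff hj.le hi).1 h.1
  have h2 := (P.pts_lt_pts_iff hi hj).1 h.2
  omega

lemma eq_pts_or_mem_Ioo {x : ℝ} (hx : x ∈ Icc a b) :
    (∃ i ≤ P.n, P.pts i = x) ∨ ∃ j < P.n, x ∈ Ioo (P.pts j) (P.pts (j + 1)) := by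
  rcases hx.2.eq_or_lt with rfl | hxb
  · exact Or.inl ⟨P.n, le_rfl, P.pts_last⟩
  obtain ⟨p, hp, hpx, hxp⟩ := P.exists_pts_le_lt ⟨hx.1, hxb⟩
  rcases hpx.eq_or_lt with h | h
  · exact Or.inl ⟨p, hp.le, h⟩
  · exact Or.inr ⟨p, hp, h, hxp⟩

lemma eq_of_mem_Ioo {x : ℝ} {i j : ℕ} (hi : i < P.n) (hj : j < P.n)
    (hxi : x ∈ Ioo (P.pts i) (P.pts (i + 1))) (hxj : x ∈ Ioo (P.pts j) (P.pts (j + 1))) :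
    i = j := by
  have h1 := (P.pts_lt_pts_iff hi.le hj).1 (hxi.1.trans hxj.2)
  have h2 := (P.pts_lt_pts_iff hj.le hi).1 (hxj.1.trans hxi.2)
  omega

end Order

section Constructions

variable {a b c d : ℝ}

def single (hab : a < b) (t : ℝ) (ht : t ∈ Icc a b) : TaggedPartition a b where
  n := 1
  pts j := if j = 0 then a else b
  tag _ := t
  n_pos := one_pos
  pts_zero := if_pos rfl
  pts_last := if_neg one_ne_zero
  pts_mono j hj := by
    obtain rfl : j = 0 := by omega
    simpa using hab
  tag_mem j hj := by
    obtain rfl : j = 0 := by omega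
    simpa using ht

lemma isFine_single {δ : ℝ → ℝ} (hab : a < b) {t : ℝ} (ht : t ∈ Icc a b)
    (hδ : Icc a b ⊆ Icc (t - δ t) (t + δ t)) : IsFine δ (single hab t ht) := fun j hj => by
  obtain rfl : j = 0 := by simpa [single] using hj
  simpa [single] using hδ

def snoc (P : TaggedPartition a c) (hcd : c < d) (t : ℝ) (ht : t ∈ Icc c d) :
    TaggedPartition a d where
  n := P.n + 1
  pts j := if j ≤ P.n then P.pts j else d
  tag j := if j < P.n then P.tag j else t
  n_pos := Nat.succ_pos _
  pts_zero := by simp [P.pts_zero]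
  pts_last := by simp
  pts_mono j hj := by
    rcases (Nat.lt_succ_iff.1 hj).lt_or_eq with h | rfl
    · simpa [h.le, Nat.succ_le_of_lt h] using P.pts_mono j h
    · simpa [P.pts_last] using hcd
  tag_mem j hj := by
    rcases (Nat.lt_succ_iff.1 hj).lt_or_eq with h | rfl
    · simpa [h, h.le, Nat.succ_le_of_lt h] using P.tag_mem j h
    · simpa [P.pts_last] using ht

lemma isFine_snoc {δ : ℝ → ℝ} {P : TaggedPartition a c} (hP : IsFine δ P) (hcd : c < d)
    {t : ℝ} (ht : t ∈ Icc c d) (hδ : Icc c d ⊆ Icc (t - δ t) (t + δ t)) :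
    IsFine δ (P.snoc hcd t ht) := fun j hj => by
  rcases (Nat.lt_succ_iff.1 hj).lt_or_eq with h | rfl
  · simpa [snoc, h, h.le, Nat.succ_le_of_lt h] using hP j h
  · simpa [snoc, P.pts_last] using hδ

end Constructions

end TaggedPartition

/-- Cousin's lemma. -/
theorem exists_isFine {a b : ℝ} (hab : a < b) {δ : ℝ → ℝ} (hδ : ∀ t ∈ Icc a b, 0 < δ t) :
    ∃ P : TaggedPartition a b, IsFine δ P := by
  set S := {x | x ∈ Ioc a b ∧ ∃ P : TaggedPartition a x, IsFine δ P}
  have hδa := hδ a (left_mem_Icc.2 hab.le)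
  have hx₀ : min b (a + δ a) ∈ S := by
    have hax : a < min b (a + δ a) := lt_min hab (by linarith)
    refine ⟨⟨hax, min_le_left _ _⟩, _,
      TaggedPartition.isFine_single hax (left_mem_Icc.2 hax.le) fun z hz => ?_⟩
    exact ⟨by linarith [hz.1], hz.2.trans (min_le_right _ _)⟩
  have hbdd : BddAbove S := ⟨b, fun x hx => hx.1.2⟩
  set c := sSup S
  have hac : a < c := hx₀.1.1.trans_le (le_csSup hbdd hx₀)
  have hcb : c ≤ b := csSup_le ⟨_, hx₀⟩ fun x hx => hx.1.2
  have hδc := hδ c ⟨hac.le, hcb⟩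
  have hcS : c ∈ S := by
    obtain ⟨x, hxS, hx⟩ := exists_lt_of_lt_csSup ⟨_, hx₀⟩ (max_lt hac (by linarith : c - δ c < c))
    rcases (le_csSup hbdd hxS).eq_or_lt with hxc | hxc
    · rw [hxc] at hxS
      exact hxS
    obtain ⟨P, hP⟩ := hxS.2
    refine ⟨⟨hac, hcb⟩, _, TaggedPartition.isFine_snoc hP hxc (right_mem_Icc.2 hxc.le)
      fun z hz => ⟨?_, by linarith [hz.2]⟩⟩
    linarith [hz.1, le_max_right a (c - δ c)]
  have hcb : c = b := by
    refine hcb.eq_of_not_lt fun hcb' => ?_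
    have hcy : c < min b (c + δ c) := lt_min hcb' (by linarith)
    obtain ⟨P, hP⟩ := hcS.2
    have hyS : min b (c + δ c) ∈ S := ⟨⟨hac.trans hcy, min_le_left _ _⟩, _,
      TaggedPartition.isFine_snoc hP hcy (left_mem_Icc.2 hcy.le)
        fun z hz => ⟨by linarith [hz.1], hz.2.trans (min_le_right _ _)⟩⟩
    exact (le_csSup hbdd hyS).not_gt hcy
  exact (hcb ▸ hcS : b ∈ S).2

theorem exists_refines_interiorTags {a b : ℝ} (hab : a < b) {F : Finset ℝ} (hF : ↑F ⊆ Icc a b) :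
    ∃ P : TaggedPartition a b, Refines P F ∧ InteriorTags P := by
  set G := insert a (insert b F)
  have hGab : ∀ x ∈ G, x ∈ Icc a b := by
    intro x hx
    rcases Finset.mem_insert.1 hx with rfl | hx
    · exact left_mem_Icc.2 hab.le
    rcases Finset.mem_insert.1 hx with rfl | hx
    · exact right_mem_Icc.2 hab.le
    · exact hF hx
  have ha : a ∈ G := Finset.mem_insert_self _ _
  have hb : b ∈ G := Finset.mem_insert_of_mem (Finset.mem_insert_self _ _)
  have hk : 1 < G.card := Finset.one_lt_card.2 ⟨a, ha, b, hb, hab.ne⟩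
  set e := G.orderEmbOfFin rfl
  set x : ℕ → ℝ := fun j => if h : j < G.card then e ⟨j, h⟩ else b
  have hx : ∀ j (h : j < G.card), x j = e ⟨j, h⟩ := fun j h => dif_pos h
  have hmono : ∀ j < G.card - 1, x j < x (j + 1) := fun j hj => by
    rw [hx j (by omega), hx (j + 1) (by omega)]
    exact e.strictMono (Fin.mk_lt_mk.2 (Nat.lt_succ_self j))
  refine ⟨⟨G.card - 1, x, fun j => (x j + x (j + 1)) / 2, by omega, ?_, ?_, hmono,
    fun j hj => ⟨by linarith [hmono j hj], by linarith [hmono j hj]⟩⟩, ?_,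
    fun j hj => ⟨by simp only; linarith [hmono j hj], by simp only; linarith [hmono j hj]⟩⟩
  · rw [hx 0 (by omega), Finset.orderEmbOfFin_zero rfl (by omega)]
    exact le_antisymm (Finset.min'_le _ _ ha) (Finset.le_min' _ _ _ fun y hy => (hGab y hy).1)
  · rw [hx _ (by omega), Finset.orderEmbOfFin_last rfl (by omega)]
    exact le_antisymm (Finset.max'_le _ _ _ fun y hy => (hGab y hy).2) (Finset.le_max' _ _ hb)
  · intro y hy
    obtain ⟨i, rfl⟩ : y ∈ Set.range e := by
      rw [Finset.range_orderEmbOfFin]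
      exact Finset.mem_insert_of_mem (Finset.mem_insert_of_mem hy)
    exact ⟨i, Nat.le_sub_one_of_lt i.2, hx i i.2⟩

section RiemannStieltjesSums

variable {a b : ℝ} (P : TaggedPartition a b)

lemma RS_add_left (f₁ f₂ g : ℝ → ℝ) : RS (f₁ + f₂) g P = RS f₁ g P + RS f₂ g P := by
  simp only [RS, Pi.add_apply, add_mul, Finset.sum_add_distrib]

lemma RS_smul_left (r : ℝ) (f g : ℝ → ℝ) : RS (r • f) g P = r * RS f g P := by
  simp only [RS, Pi.smul_apply, smul_eq_mul, mul_assoc, Finset.mul_sum]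

lemma RS_sub_left (f₁ f₂ g : ℝ → ℝ) : RS (f₁ - f₂) g P = RS f₁ g P - RS f₂ g P := by
  simp only [RS, Pi.sub_apply, sub_mul, Finset.sum_sub_distrib]

lemma RS_add_right (f g₁ g₂ : ℝ → ℝ) : RS f (g₁ + g₂) P = RS f g₁ P + RS f g₂ P := by
  simp only [RS, ← Finset.sum_add_distrib, Pi.add_apply]
  exact Finset.sum_congr rfl fun j _ => by ring

lemma RS_smul_right (r : ℝ) (f g : ℝ → ℝ) : RS f (r • g) P = r * RS f g P := by
  simp only [RS, Finset.mul_sum, Pi.smul_apply, smul_eq_mul]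
  exact Finset.sum_congr rfl fun j _ => by ring

lemma RS_sub_right (f g₁ g₂ : ℝ → ℝ) : RS f (g₁ - g₂) P = RS f g₁ P - RS f g₂ P := by
  simp only [RS, ← Finset.sum_sub_distrib, Pi.sub_apply]
  exact Finset.sum_congr rfl fun j _ => by ring

lemma RS_congr_left {f₁ f₂ : ℝ → ℝ} (h : EqOn f₁ f₂ (Icc a b)) (g : ℝ → ℝ) :
    RS f₁ g P = RS f₂ g P :=
  Finset.sum_congr rfl fun j hj => by rw [h (P.tag_mem_Icc (Finset.mem_range.1 hj))]

lemma RS_congr_right (f : ℝ → ℝ) {g₁ g₂ : ℝ → ℝ} (h : EqOn g₁ g₂ (Icc a b)) :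
    RS f g₁ P = RS f g₂ P :=
  Finset.sum_congr rfl fun j hj => by
    have hj := Finset.mem_range.1 hj
    rw [h (P.pts_mem hj), h (P.pts_mem hj.le)]

lemma RS_zero_left (g : ℝ → ℝ) : RS 0 g P = 0 := by
  simp [RS]

lemma RS_zero_right (f : ℝ → ℝ) : RS f 0 P = 0 := by
  simp [RS]

lemma RS_one_left (g : ℝ → ℝ) : RS 1 g P = g b - g a := by
  simpa [RS] using P.sum_sub_pts g

lemma RS_one_right (f : ℝ → ℝ) : RS f 1 P = 0 := by
  simp [RS]

/-- Summation by parts. -/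
lemma RS_eq_sub_sum (f g : ℝ → ℝ) :
    RS f g P = g b * f b - g a * f a - ∑ j ∈ Finset.range P.n,
      (g (P.pts j) * (f (P.tag j) - f (P.pts j)) +
        g (P.pts (j + 1)) * (f (P.pts (j + 1)) - f (P.tag j))) := by
  rw [← P.sum_sub_pts (fun x => g x * f x), ← Finset.sum_sub_distrib]
  exact Finset.sum_congr rfl fun j _ => by ring

lemma sum_abs_sub_le_variationOnFromTo {g : ℝ → ℝ} (hg : BoundedVariationOn g (Icc a b)) :
    ∑ j ∈ Finset.range P.n, (|g (P.tag j) - g (P.pts j)| + |g (P.pts (j + 1)) - g (P.tag j)|) ≤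
      variationOnFromTo g (Icc a b) a b := by
  set φ := variationOnFromTo g (Icc a b) a
  have hφ : ∀ {x y}, x ∈ Icc a b → y ∈ Icc a b → x ≤ y → |g y - g x| ≤ φ y - φ x :=
    variationOnFromTo.abs_sub_le_sub_of_le hg.locallyBoundedVariationOn
      (left_mem_Icc.2 P.left_lt_right.le)
  calc _ ≤ ∑ j ∈ Finset.range P.n, (φ (P.pts (j + 1)) - φ (P.pts j)) :=
        Finset.sum_le_sum fun j hj => by
          have hj := Finset.mem_range.1 hj
          linarith [hφ (P.pts_mem hj.le) (P.tag_mem_Icc hj) (P.tag_mem j hj).1,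
            hφ (P.tag_mem_Icc hj) (P.pts_mem hj) (P.tag_mem j hj).2]
    _ = φ b := by rw [P.sum_sub_pts φ, show φ a = 0 from variationOnFromTo.self _ _ _, sub_zero]

variable {f g : ℝ → ℝ} {M : ℝ}

lemma abs_RS_le (hg : BoundedVariationOn g (Icc a b)) (hM : ∀ x ∈ Icc a b, |f x| ≤ M) :
    |RS f g P| ≤ M * variationOnFromTo g (Icc a b) a b := by
  have hM₀ : 0 ≤ M := (abs_nonneg _).trans (hM a (left_mem_Icc.2 P.left_lt_right.le))
  calc |RS f g P| ≤ ∑ j ∈ Finset.range P.n, |f (P.tag j) * (g (P.pts (j + 1)) - g (P.pts j))| :=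
        Finset.abs_sum_le_sum_abs _ _
    _ = ∑ j ∈ Finset.range P.n, |f (P.tag j)| * |g (P.pts (j + 1)) - g (P.pts j)| := by
        simp only [abs_mul]
    _ ≤ ∑ j ∈ Finset.range P.n,
          M * (|g (P.tag j) - g (P.pts j)| + |g (P.pts (j + 1)) - g (P.tag j)|) :=
        Finset.sum_le_sum fun j hj =>
          mul_le_mul (hM _ (P.tag_mem_Icc (Finset.mem_range.1 hj)))
            ((abs_sub_le _ (g (P.tag j)) _).trans_eq (add_comm _ _)) (abs_nonneg _) hM₀
    _ ≤ M * variationOnFromTo g (Icc a b) a b := by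
        rw [← Finset.mul_sum]
        exact mul_le_mul_of_nonneg_left (sum_abs_sub_le_variationOnFromTo P hg) hM₀

lemma abs_RS_le_of_integrator (hg : BoundedVariationOn g (Icc a b))
    (hM : ∀ x ∈ Icc a b, |f x| ≤ M) :
    |RS g f P| ≤ M * (|g a| + |g b| + variationOnFromTo g (Icc a b) a b) := by
  have hab := P.left_lt_right.le
  have hM₀ : 0 ≤ M := (abs_nonneg _).trans (hM a (left_mem_Icc.2 hab))
  have hsum : |∑ j ∈ Finset.range P.n, (f (P.pts j) * (g (P.tag j) - g (P.pts j)) +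
      f (P.pts (j + 1)) * (g (P.pts (j + 1)) - g (P.tag j)))| ≤
      M * variationOnFromTo g (Icc a b) a b := by
    calc _ ≤ ∑ j ∈ Finset.range P.n, |f (P.pts j) * (g (P.tag j) - g (P.pts j)) +
          f (P.pts (j + 1)) * (g (P.pts (j + 1)) - g (P.tag j))| := Finset.abs_sum_le_sum_abs _ _
      _ ≤ ∑ j ∈ Finset.range P.n,
          M * (|g (P.tag j) - g (P.pts j)| + |g (P.pts (j + 1)) - g (P.tag j)|) :=
          Finset.sum_le_sum fun j hj => by
            have hj := Finset.mem_range.1 hj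
            refine (abs_add_le _ _).trans ?_
            rw [abs_mul, abs_mul, mul_add]
            gcongr
            exacts [hM _ (P.pts_mem hj.le), hM _ (P.pts_mem hj)]
      _ ≤ M * variationOnFromTo g (Icc a b) a b := by
          rw [← Finset.mul_sum]
          exact mul_le_mul_of_nonneg_left (sum_abs_sub_le_variationOnFromTo P hg) hM₀
  have hb := mul_le_mul_of_nonneg_right (hM b (right_mem_Icc.2 hab)) (abs_nonneg (g b))
  have ha := mul_le_mul_of_nonneg_right (hM a (left_mem_Icc.2 hab)) (abs_nonneg (g a))
  rw [RS_eq_sub_sum P g f]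
  calc _ ≤ |f b * g b| + |f a * g a| + _ := (abs_sub _ _).trans (add_le_add_left (abs_sub _ _) _)
    _ ≤ _ := by rw [abs_mul, abs_mul]; linarith

end RiemannStieltjesSums

abbrev Gauge (a b : ℝ) := {δ : ℝ → ℝ // ∀ t ∈ Icc a b, 0 < δ t ∧ δ t < 1}

def fineFilter (a b : ℝ) : Filter (TaggedPartition a b) :=
  ⨅ δ : Gauge a b, 𝓟 {P | IsFine δ.1 P}

def refiningFilter (a b : ℝ) : Filter (TaggedPartition a b) :=
  ⨅ D : {D : Finset ℝ // ↑D ⊆ Icc a b}, 𝓟 {P | Refines P D.1 ∧ InteriorTags P}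

section Filters

variable {a b : ℝ}

lemma IsFine.mono {δ₁ δ₂ : ℝ → ℝ} (h : ∀ t, δ₁ t ≤ δ₂ t) {P : TaggedPartition a b}
    (hP : IsFine δ₁ P) : IsFine δ₂ P := fun j hj =>
  (hP j hj).trans (Icc_subset_Icc (by linarith [h (P.tag j)]) (by linarith [h (P.tag j)]))

lemma hasBasis_fineFilter :
    (fineFilter a b).HasBasis (fun _ => True) fun δ : Gauge a b => {P | IsFine δ.1 P} := by
  have : Nonempty (Gauge a b) := ⟨⟨fun _ => 1 / 2, fun _ _ => by norm_num⟩⟩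
  refine hasBasis_iInf_principal fun δ₁ δ₂ => ⟨⟨fun t => min (δ₁.1 t) (δ₂.1 t), fun t ht =>
    ⟨lt_min (δ₁.2 t ht).1 (δ₂.2 t ht).1, (min_le_left _ _).trans_lt (δ₁.2 t ht).2⟩⟩, ?_, ?_⟩
  · exact fun P (hP : IsFine _ P) => hP.mono fun t => min_le_left _ _
  · exact fun P (hP : IsFine _ P) => hP.mono fun t => min_le_right _ _

lemma hasBasis_refiningFilter :
    (refiningFilter a b).HasBasis (fun _ => True) fun D : {D : Finset ℝ // ↑D ⊆ Icc a b} =>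
      {P | Refines P D.1 ∧ InteriorTags P} := by
  have : Nonempty {D : Finset ℝ // ↑D ⊆ Icc a b} := ⟨⟨∅, by simp⟩⟩
  refine hasBasis_iInf_principal fun D₁ D₂ => ⟨⟨D₁.1 ∪ D₂.1, by
    rw [Finset.coe_union]; exact union_subset D₁.2 D₂.2⟩, ?_, ?_⟩
  · exact fun P hP => ⟨fun x hx => hP.1 x (Finset.mem_union_left _ hx), hP.2⟩
  · exact fun P hP => ⟨fun x hx => hP.1 x (Finset.mem_union_right _ hx), hP.2⟩

lemma hasKS_iff_tendsto {f g : ℝ → ℝ} {I : ℝ} :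
    HasKS f g a b I ↔ Tendsto (RS f g) (fineFilter a b) (𝓝 I) := by
  simp [hasBasis_fineFilter.tendsto_iff Metric.nhds_basis_ball, HasKS, Real.dist_eq]

lemma hasDushnik_iff_tendsto {f g : ℝ → ℝ} {I : ℝ} :
    HasDushnik f g a b I ↔ Tendsto (RS f g) (refiningFilter a b) (𝓝 I) := by
  simp [hasBasis_refiningFilter.tendsto_iff Metric.nhds_basis_ball, HasDushnik, Real.dist_eq]

lemma eventually_isFine {δ : ℝ → ℝ} (hδ : ∀ t ∈ Icc a b, 0 < δ t ∧ δ t < 1) :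
    ∀ᶠ P in fineFilter a b, IsFine δ P :=
  hasBasis_fineFilter.mem_of_mem (i := (⟨δ, hδ⟩ : Gauge a b)) trivial

lemma eventually_refines_interiorTags {D : Finset ℝ} (hD : ↑D ⊆ Icc a b) :
    ∀ᶠ P in refiningFilter a b, Refines P D ∧ InteriorTags P :=
  hasBasis_refiningFilter.mem_of_mem (i := (⟨D, hD⟩ : {D : Finset ℝ // ↑D ⊆ Icc a b})) trivial

lemma fineFilter_neBot (hab : a < b) : (fineFilter a b).NeBot :=
  hasBasis_fineFilter.neBot_iff.2 fun {δ} _ => exists_isFine hab fun t ht => (δ.2 t ht).1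

lemma refiningFilter_neBot (hab : a < b) : (refiningFilter a b).NeBot :=
  hasBasis_refiningFilter.neBot_iff.2 fun {D} _ => exists_refines_interiorTags hab D.2

end Filters

theorem exists_tendsto_of_abs_sub_le {α : Type*} {l : Filter α} [l.NeBot] {F : ℕ → α → ℝ}
    {G : α → ℝ} {L e : ℕ → ℝ} (he : Tendsto e atTop (𝓝 0)) (hFG : ∀ n x, |F n x - G x| ≤ e n)
    (hF : ∀ n, Tendsto (F n) l (𝓝 (L n))) : ∃ ℓ, Tendsto G l (𝓝 ℓ) ∧ Tendsto L atTop (𝓝 ℓ) := by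
  have hL : ∀ m n, |L m - L n| ≤ e m + e n := fun m n =>
    le_of_tendsto' ((hF m).sub (hF n)).abs fun x =>
      (abs_sub_le _ (G x) _).trans (add_le_add (hFG m x) (by rw [abs_sub_comm]; exact hFG n x))
  have hcauchy : CauchySeq L := Metric.cauchySeq_iff'.2 fun ε hε => by
    obtain ⟨N, hN⟩ := (he.eventually (gt_mem_nhds (half_pos hε))).exists_forall_of_atTop
    exact ⟨N, fun n hn => (hL n N).trans_lt (by linarith [hN n hn, hN N le_rfl])⟩
  obtain ⟨ℓ, hℓ⟩ := cauchySeq_tendsto_of_complete hcauchy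
  have hunif : TendstoUniformly F G atTop := Metric.tendstoUniformly_iff.2 fun ε hε =>
    (he.eventually (gt_mem_nhds hε)).mono fun n hn x => by
      rw [dist_comm, Real.dist_eq]; exact (hFG n x).trans_lt hn
  exact ⟨ℓ, hunif.tendsto_of_eventually_tendsto (Eventually.of_forall hF) hℓ, hℓ⟩

def IntegratesByParts (f g : ℝ → ℝ) (a b : ℝ) : Prop :=
  ∃ K D : ℝ, HasKS f g a b K ∧ HasDushnik g f a b D ∧ K = f b * g b - f a * g a - D

section IntegratesByParts

variable {a b : ℝ} {g : ℝ → ℝ}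

def integratesByPartsSubmodule (g : ℝ → ℝ) (a b : ℝ) : Submodule ℝ (ℝ → ℝ) where
  carrier := {f | IntegratesByParts f g a b}
  zero_mem' := ⟨0, 0,
    hasKS_iff_tendsto.2 ((tendsto_congr fun P => (RS_zero_left P g).symm).1 tendsto_const_nhds),
    hasDushnik_iff_tendsto.2
      ((tendsto_congr fun P => (RS_zero_right P g).symm).1 tendsto_const_nhds),
    by simp⟩
  add_mem' := by
    rintro f₁ f₂ ⟨K₁, D₁, hK₁, hD₁, h₁⟩ ⟨K₂, D₂, hK₂, hD₂, h₂⟩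
    refine ⟨K₁ + K₂, D₁ + D₂, ?_, ?_, ?_⟩
    · rw [hasKS_iff_tendsto] at hK₁ hK₂ ⊢
      simpa only [← RS_add_left] using hK₁.add hK₂
    · rw [hasDushnik_iff_tendsto] at hD₁ hD₂ ⊢
      simpa only [← RS_add_right] using hD₁.add hD₂
    · rw [h₁, h₂, Pi.add_apply, Pi.add_apply]; ring
  smul_mem' := by
    rintro r f ⟨K, D, hK, hD, h⟩
    refine ⟨r * K, r * D, ?_, ?_, ?_⟩
    · rw [hasKS_iff_tendsto] at hK ⊢
      simpa only [← RS_smul_left] using hK.const_mul r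
    · rw [hasDushnik_iff_tendsto] at hD ⊢
      simpa only [← RS_smul_right] using hD.const_mul r
    · rw [h, Pi.smul_apply, Pi.smul_apply, smul_eq_mul, smul_eq_mul]; ring

lemma IntegratesByParts.congr {f₁ f₂ : ℝ → ℝ} (h : IntegratesByParts f₁ g a b)
    (hf : EqOn f₁ f₂ (Icc a b)) (hab : a ≤ b) : IntegratesByParts f₂ g a b := by
  obtain ⟨K, D, hK, hD, hKD⟩ := h
  refine ⟨K, D, hasKS_iff_tendsto.2 ((tendsto_congr fun P => RS_congr_left P hf g).1
    (hasKS_iff_tendsto.1 hK)), hasDushnik_iff_tendsto.2 ((tendsto_congr fun P =>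
    RS_congr_right P g hf).1 (hasDushnik_iff_tendsto.1 hD)), ?_⟩
  rw [hKD, hf (left_mem_Icc.2 hab), hf (right_mem_Icc.2 hab)]

lemma integratesByParts_one : IntegratesByParts 1 g a b :=
  ⟨g b - g a, 0,
    hasKS_iff_tendsto.2 ((tendsto_congr fun P => (RS_one_left P g).symm).1 tendsto_const_nhds),
    hasDushnik_iff_tendsto.2
      ((tendsto_congr fun P => (RS_one_right P g).symm).1 tendsto_const_nhds),
    by simp⟩

lemma IntegratesByParts.of_abs_sub_le (hab : a < b) (hg : BoundedVariationOn g (Icc a b))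
    {f : ℝ → ℝ} {s : ℕ → ℝ → ℝ} {e : ℕ → ℝ} (hs : ∀ n, IntegratesByParts (s n) g a b)
    (hsf : ∀ n, ∀ x ∈ Icc a b, |s n x - f x| ≤ e n) (he : Tendsto e atTop (𝓝 0)) :
    IntegratesByParts f g a b := by
  have := fineFilter_neBot hab
  have := refiningFilter_neBot hab
  choose K D hK hD hKD using hs
  set V := variationOnFromTo g (Icc a b) a b
  obtain ⟨K₀, hK₀, hKK₀⟩ := exists_tendsto_of_abs_sub_le (F := fun n => RS (s n) g) (G := RS f g)
    (by simpa using he.mul_const V)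
    (fun n P => by rw [← RS_sub_left]; exact abs_RS_le P hg (hsf n))
    (fun n => hasKS_iff_tendsto.1 (hK n))
  obtain ⟨D₀, hD₀, hDD₀⟩ := exists_tendsto_of_abs_sub_le (F := fun n => RS g (s n)) (G := RS g f)
    (by simpa using he.mul_const (|g a| + |g b| + V))
    (fun n P => by rw [← RS_sub_right]; exact abs_RS_le_of_integrator P hg (hsf n))
    (fun n => hasDushnik_iff_tendsto.1 (hD n))
  have hpt : ∀ x ∈ Icc a b, Tendsto (fun n => s n x) atTop (𝓝 (f x)) := fun x hx =>
    tendsto_iff_norm_sub_tendsto_zero.2 (squeeze_zero (fun _ => norm_nonneg _)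
      (fun n => (Real.norm_eq_abs _).trans_le (hsf n x hx)) he)
  refine ⟨K₀, D₀, hasKS_iff_tendsto.2 hK₀, hasDushnik_iff_tendsto.2 hD₀,
    tendsto_nhds_unique hKK₀ ?_⟩
  rw [show K = fun n => s n b * g b - s n a * g a - D n from funext hKD]
  exact (((hpt b (right_mem_Icc.2 hab.le)).mul_const _).sub
    ((hpt a (left_mem_Icc.2 hab.le)).mul_const _)).sub hDD₀

end IntegratesByParts

section Indicators

variable {a b : ℝ}

lemma RS_indicator_left {S : Set ℝ} (g : ℝ → ℝ) (P : TaggedPartition a b) {k : ℕ} (hk : k ≤ P.n)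
    (hS : ∀ j < P.n, P.tag j ∈ S ↔ k ≤ j) : RS (S.indicator 1) g P = g b - g (P.pts k) := by
  have htel := Finset.sum_Ico_sub (fun j => g (P.pts j)) hk
  rw [P.pts_last] at htel
  rw [← htel, RS, Finset.range_eq_Ico, ← Finset.sum_Ico_consecutive _ (Nat.zero_le k) hk,
    Finset.sum_eq_zero, zero_add]
  · refine Finset.sum_congr rfl fun j hj => ?_
    have hj := Finset.mem_Ico.1 hj
    rw [indicator_of_mem ((hS j hj.2).2 hj.1), Pi.one_apply, one_mul]
  · intro j hj
    have hj := Finset.mem_Ico.1 hj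
    rw [indicator_of_notMem fun h => absurd ((hS j (by omega)).1 h) (by omega), zero_mul]

lemma RS_indicator_right {S : Set ℝ} (g : ℝ → ℝ) (P : TaggedPartition a b) {p : ℕ} (hp : p < P.n)
    (hS : ∀ j ≤ P.n, P.pts j ∈ S ↔ p < j) : RS g (S.indicator 1) P = g (P.tag p) := by
  have hind : ∀ j ≤ P.n, S.indicator 1 (P.pts j) = if p < j then (1 : ℝ) else 0 := fun j hj => by
    by_cases h : p < j <;> simp [h, hS j hj]
  rw [RS, Finset.sum_eq_single p]
  · simp [hind p hp.le, hind (p + 1) hp]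
  · intro j hj hjp
    have hj := Finset.mem_range.1 hj
    rw [hind j hj.le, hind (j + 1) hj, if_congr (by omega : p < j + 1 ↔ p < j) rfl rfl, sub_self,
      mul_zero]
  · exact fun h => absurd (Finset.mem_range.2 hp) h

/-- `|t - c| / 2` keeps `c` out of the `δ`-neighbourhood of every tag `t ≠ c`. -/
noncomputable def pinGauge (c r t : ℝ) : ℝ :=
  min (1 / 2) (if t = c then r else |t - c| / 2)

lemma pinGauge_pos {c r : ℝ} (hr : 0 < r) (t : ℝ) : 0 < pinGauge c r t ∧ pinGauge c r t < 1 := by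
  refine ⟨lt_min (by norm_num) ?_, (min_le_left _ _).trans_lt (by norm_num)⟩
  split_ifs with h
  · exact hr
  · exact half_pos (abs_pos.2 (sub_ne_zero.2 h))

lemma pinGauge_self_le (c r : ℝ) : pinGauge c r c ≤ r :=
  (min_le_right _ _).trans (by simp)

lemma tag_eq_of_isFine_pinGauge {c r : ℝ} {P : TaggedPartition a b} (hP : IsFine (pinGauge c r) P)
    {j : ℕ} (hj : j < P.n) (hc : c ∈ Icc (P.pts j) (P.pts (j + 1))) : P.tag j = c := by
  by_contra hne
  have hδ : pinGauge c r (P.tag j) ≤ |P.tag j - c| / 2 := (min_le_right _ _).trans (by simp [hne])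
  have hpos : 0 < |P.tag j - c| := abs_pos.2 (sub_ne_zero.2 hne)
  have hle : |P.tag j - c| ≤ pinGauge c r (P.tag j) :=
    abs_sub_le_iff.2 ⟨by linarith [(hP j hj hc).1], by linarith [(hP j hj hc).2]⟩
  linarith

lemma exists_Ioc_abs_sub_lt {g : ℝ → ℝ} {c L : ℝ} (hcb : c < b)
    (hL : Tendsto g (𝓝[Ioc c b] c) (𝓝 L)) {ε : ℝ} (hε : 0 < ε) :
    ∃ c' ∈ Ioc c b, ∀ u ∈ Ioc c c', |g u - L| < ε := by
  obtain ⟨δ, hδ, h⟩ := Metric.tendsto_nhdsWithin_nhds.1 hL ε hε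
  refine ⟨min b (c + δ / 2), ⟨lt_min hcb (by linarith), min_le_left _ _⟩, fun u hu => ?_⟩
  have hub := hu.2.trans (min_le_left _ _)
  have huδ := hu.2.trans (min_le_right _ _)
  refine h ⟨hu.1, hub⟩ ?_
  rw [Real.dist_eq, abs_of_pos (by linarith [hu.1])]
  linarith

lemma exists_Ico_abs_sub_lt {g : ℝ → ℝ} {c L : ℝ} (hac : a < c)
    (hL : Tendsto g (𝓝[Ico a c] c) (𝓝 L)) {ε : ℝ} (hε : 0 < ε) :
    ∃ c' ∈ Ico a c, ∀ u ∈ Ico c' c, |g u - L| < ε := by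
  obtain ⟨δ, hδ, h⟩ := Metric.tendsto_nhdsWithin_nhds.1 hL ε hε
  refine ⟨max a (c - δ / 2), ⟨le_max_left _ _, max_lt hac (by linarith)⟩, fun u hu => ?_⟩
  have hau := (le_max_left _ _).trans hu.1
  have huδ := (le_max_right _ _).trans hu.1
  refine h ⟨hau, hu.2⟩ ?_
  rw [Real.dist_eq, abs_of_neg (by linarith [hu.2])]
  linarith

variable {g : ℝ → ℝ} {c L : ℝ}

lemma hasKS_indicator_Ioi (hac : a ≤ c) (hcb : c < b) (hL : Tendsto g (𝓝[Ioc c b] c) (𝓝 L)) :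
    HasKS ((Ioi c).indicator 1) g a b (g b - L) := by
  rw [hasKS_iff_tendsto, Metric.tendsto_nhds]
  intro ε hε
  obtain ⟨c', hc', hgc'⟩ := exists_Ioc_abs_sub_lt hcb hL hε
  filter_upwards [eventually_isFine fun t _ => pinGauge_pos (sub_pos.2 hc'.1) t] with P hP
  obtain ⟨p, hp, hpc, hcp⟩ := P.exists_pts_le_lt ⟨hac, hcb⟩
  have htag := tag_eq_of_isFine_pinGauge hP hp ⟨hpc, hcp.le⟩
  have hS : ∀ j < P.n, P.tag j ∈ Ioi c ↔ p + 1 ≤ j := fun j hj => by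
    refine ⟨fun h => not_lt.1 fun hjp => ?_, fun h => hcp.trans_le (P.pts_le_tag h hj)⟩
    exact (mem_Ioi.1 h).not_ge (htag ▸ P.tag_le_tag (Nat.lt_succ_iff.1 hjp) hp)
  have hnext : P.pts (p + 1) ≤ c' := by
    have := (hP p hp ⟨(P.pts_mono p hp).le, le_rfl⟩).2
    rw [htag] at this
    linarith [pinGauge_self_le c (c' - c)]
  rw [RS_indicator_left g P hp hS, Real.dist_eq, sub_sub_sub_cancel_left, abs_sub_comm]
  exact hgc' _ ⟨hcp, hnext⟩

lemma hasKS_indicator_Ici (hac : a < c) (hcb : c ≤ b) (hL : Tendsto g (𝓝[Ico a c] c) (𝓝 L)) :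
    HasKS ((Ici c).indicator 1) g a b (g b - L) := by
  rw [hasKS_iff_tendsto, Metric.tendsto_nhds]
  intro ε hε
  obtain ⟨c', hc', hgc'⟩ := exists_Ico_abs_sub_lt hac hL hε
  filter_upwards [eventually_isFine fun t _ => pinGauge_pos (sub_pos.2 hc'.2) t] with P hP
  obtain ⟨p, hp, hpc, hcp⟩ := P.exists_pts_lt_le ⟨hac, hcb⟩
  have htag := tag_eq_of_isFine_pinGauge hP hp ⟨hpc.le, hcp⟩
  have hS : ∀ j < P.n, P.tag j ∈ Ici c ↔ p ≤ j := fun j hj => by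
    refine ⟨fun h => not_lt.1 fun hjp => ?_, fun h => htag ▸ P.tag_le_tag h hj⟩
    exact (mem_Ici.1 h).not_gt ((P.tag_le_pts hjp hp.le).trans_lt hpc)
  have hprev : c' ≤ P.pts p := by
    have := (hP p hp ⟨le_rfl, (P.pts_mono p hp).le⟩).1
    rw [htag] at this
    linarith [pinGauge_self_le c (c - c')]
  rw [RS_indicator_left g P hp.le hS, Real.dist_eq, sub_sub_sub_cancel_left, abs_sub_comm]
  exact hgc' _ ⟨hprev, hpc⟩

lemma hasDushnik_indicator_Ioi (hac : a ≤ c) (hcb : c < b)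
    (hL : Tendsto g (𝓝[Ioc c b] c) (𝓝 L)) : HasDushnik g ((Ioi c).indicator 1) a b L := by
  rw [hasDushnik_iff_tendsto, Metric.tendsto_nhds]
  intro ε hε
  obtain ⟨c', hc', hgc'⟩ := exists_Ioc_abs_sub_lt hcb hL hε
  have hD : ↑({c, c'} : Finset ℝ) ⊆ Icc a b := by
    simp [insert_subset_iff, hac, hcb.le, hac.trans hc'.1.le, hc'.2]
  filter_upwards [eventually_refines_interiorTags hD] with P ⟨hPD, hPint⟩
  obtain ⟨p, hpn, hpc⟩ := hPD c (by simp)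
  obtain ⟨q, hqn, hqc'⟩ := hPD c' (by simp)
  have hp : p < P.n := hpn.lt_of_ne fun h => by rw [h, P.pts_last] at hpc; exact hcb.ne' hpc
  have hpq : p < q := (P.pts_lt_pts_iff hpn hqn).1 (by rw [hpc, hqc']; exact hc'.1)
  have hS : ∀ j ≤ P.n, P.pts j ∈ Ioi c ↔ p < j := fun j hj => by
    rw [mem_Ioi, ← hpc, P.pts_lt_pts_iff hpn hj]
  rw [RS_indicator_right g P hp hS, Real.dist_eq]
  refine hgc' _ ⟨hpc ▸ (hPint p hp).1, ?_⟩
  exact (hPint p hp).2.le.trans (hqc' ▸ P.pts_le hpq hqn)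

lemma hasDushnik_indicator_Ici (hac : a < c) (hcb : c ≤ b)
    (hL : Tendsto g (𝓝[Ico a c] c) (𝓝 L)) : HasDushnik g ((Ici c).indicator 1) a b L := by
  rw [hasDushnik_iff_tendsto, Metric.tendsto_nhds]
  intro ε hε
  obtain ⟨c', hc', hgc'⟩ := exists_Ico_abs_sub_lt hac hL hε
  have hD : ↑({c, c'} : Finset ℝ) ⊆ Icc a b := by
    simp [insert_subset_iff, hac.le, hcb, hc'.1, hc'.2.le.trans hcb]
  filter_upwards [eventually_refines_interiorTags hD] with P ⟨hPD, hPint⟩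
  obtain ⟨p, hpn, hpc⟩ := hPD c (by simp)
  obtain ⟨q, hqn, hqc'⟩ := hPD c' (by simp)
  have hqp : q < p := (P.pts_lt_pts_iff hqn hpn).1 (by rw [hpc, hqc']; exact hc'.2)
  obtain ⟨r, rfl⟩ : ∃ r, p = r + 1 := Nat.exists_eq_succ_of_ne_zero (by omega)
  have hS : ∀ j ≤ P.n, P.pts j ∈ Ici c ↔ r < j := fun j hj => by
    rw [mem_Ici, ← hpc, P.pts_le_pts_iff hpn hj, Nat.succ_le_iff]
  rw [RS_indicator_right g P hpn hS, Real.dist_eq]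
  refine hgc' _ ⟨?_, hpc ▸ (hPint r hpn).2⟩
  exact (hqc' ▸ P.pts_le (Nat.lt_succ_iff.1 hqp) (by omega)).trans (hPint r hpn).1.le

lemma integratesByParts_indicator_Ioi (hg : Regulated g a b) (hc : c ∈ Icc a b) :
    IntegratesByParts ((Ioi c).indicator 1) g a b := by
  rcases hc.2.lt_or_eq with hcb | rfl
  · obtain ⟨L, hL⟩ := hg.2 c ⟨hc.1, hcb⟩
    refine ⟨g b - L, L, hasKS_indicator_Ioi hc.1 hcb hL, hasDushnik_indicator_Ioi hc.1 hcb hL, ?_⟩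
    simp [indicator, hcb, not_lt.2 hc.1]
  · exact (integratesByPartsSubmodule g a c).zero_mem.congr
      (fun x hx => by simp [indicator, not_lt.2 hx.2]) hc.1

lemma integratesByParts_indicator_Ici (hg : Regulated g a b) (hc : c ∈ Icc a b) :
    IntegratesByParts ((Ici c).indicator 1) g a b := by
  rcases hc.1.lt_or_eq with hac | rfl
  · obtain ⟨L, hL⟩ := hg.1 c ⟨hac, hc.2⟩
    refine ⟨g b - L, L, hasKS_indicator_Ici hac hc.2 hL, hasDushnik_indicator_Ici hac hc.2 hL, ?_⟩
    simp [indicator, hc.2, not_le.2 hac]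
  · exact integratesByParts_one.congr (fun x hx => by simp [indicator, hx.1]) hc.2

end Indicators

section StepFunctions

variable {a b : ℝ}

namespace TaggedPartition

noncomputable def step (P : TaggedPartition a b) (f : ℝ → ℝ) : ℝ → ℝ :=
  ∑ i ∈ Finset.range (P.n + 1), f (P.pts i) • ({P.pts i} : Set ℝ).indicator 1 +
    ∑ j ∈ Finset.range P.n, f (P.tag j) • (Ioo (P.pts j) (P.pts (j + 1))).indicator 1

variable (P : TaggedPartition a b) (f : ℝ → ℝ)

lemma step_apply (x : ℝ) : P.step f x =
    ∑ i ∈ Finset.range (P.n + 1), f (P.pts i) * ({P.pts i} : Set ℝ).indicator 1 x +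
      ∑ j ∈ Finset.range P.n, f (P.tag j) * (Ioo (P.pts j) (P.pts (j + 1))).indicator 1 x := by
  simp [step]

lemma step_pts {i : ℕ} (hi : i ≤ P.n) : P.step f (P.pts i) = f (P.pts i) := by
  have hIoo : ∑ j ∈ Finset.range P.n,
      f (P.tag j) * (Ioo (P.pts j) (P.pts (j + 1))).indicator 1 (P.pts i) = 0 :=
    Finset.sum_eq_zero fun j hj => by
      rw [indicator_of_notMem (P.pts_notMem_Ioo hi (Finset.mem_range.1 hj)), mul_zero]
  rw [step_apply, hIoo, add_zero, Finset.sum_eq_single i]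
  · simp
  · intro i' hi' hne
    rw [indicator_of_notMem, mul_zero]
    exact fun h => hne (P.pts_strictMonoOn.injOn (Nat.lt_succ_iff.1 (Finset.mem_range.1 hi'))
      hi (mem_singleton_iff.1 h).symm)
  · exact fun h => absurd (Finset.mem_range.2 (Nat.lt_succ_of_le hi)) h

lemma step_of_mem_Ioo {x : ℝ} {j : ℕ} (hj : j < P.n) (hx : x ∈ Ioo (P.pts j) (P.pts (j + 1))) :
    P.step f x = f (P.tag j) := by
  rw [step_apply, Finset.sum_eq_zero fun i hi => ?_, zero_add, Finset.sum_eq_single j]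
  · simp [hx]
  · exact fun j' hj' hne => by
      rw [indicator_of_notMem fun h => hne (P.eq_of_mem_Ioo (Finset.mem_range.1 hj') hj h hx),
        mul_zero]
  · exact fun h => absurd (Finset.mem_range.2 hj) h
  · rw [indicator_of_notMem, mul_zero]
    rintro rfl
    exact P.pts_notMem_Ioo (Nat.lt_succ_iff.1 (Finset.mem_range.1 hi)) hj hx

lemma abs_sub_step_le {ε : ℝ} (hε : 0 ≤ ε)
    (hP : ∀ j < P.n, ∀ x ∈ Ioo (P.pts j) (P.pts (j + 1)), |f x - f (P.tag j)| ≤ ε) {x : ℝ}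
    (hx : x ∈ Icc a b) : |P.step f x - f x| ≤ ε := by
  rcases P.eq_pts_or_mem_Ioo hx with ⟨i, hi, rfl⟩ | ⟨j, hj, hxj⟩
  · rwa [P.step_pts f hi, sub_self, abs_zero]
  · rw [P.step_of_mem_Ioo f hj hxj, abs_sub_comm]
    exact hP j hj x hxj

lemma step_mem {g : ℝ → ℝ} (hg : Regulated g a b) :
    P.step f ∈ integratesByPartsSubmodule g a b := by
  refine add_mem (Submodule.sum_mem _ fun i hi => Submodule.smul_mem _ _ ?_)
    (Submodule.sum_mem _ fun j hj => Submodule.smul_mem _ _ ?_)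
  · have hc := P.pts_mem (Nat.lt_succ_iff.1 (Finset.mem_range.1 hi))
    rw [← Icc_self, ← Ici_sdiff_Ioi, indicator_sdiff Ioi_subset_Ici_self]
    exact sub_mem (integratesByParts_indicator_Ici hg hc) (integratesByParts_indicator_Ioi hg hc)
  · have hj := Finset.mem_range.1 hj
    rw [← Ioi_sdiff_Ici, indicator_sdiff (Ici_subset_Ioi.2 (P.pts_mono j hj))]
    exact sub_mem (integratesByParts_indicator_Ioi hg (P.pts_mem hj.le))
      (integratesByParts_indicator_Ici hg (P.pts_mem hj))

end TaggedPartition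

lemma Ioo_subset_Ioo_or_of_notMem {p q u v w x : ℝ} (hx : x ∈ Ioo p q) (hxuv : x ∈ Ioo u v)
    (hu : u ∉ Ioo p q) (hw : w ∉ Ioo p q) (hv : v ∉ Ioo p q) :
    Ioo p q ⊆ Ioo u w ∨ Ioo p q ⊆ Ioo w v := by
  have hup : u ≤ p := not_lt.1 fun h => hu ⟨h, hxuv.1.trans hx.2⟩
  have hqv : q ≤ v := not_lt.1 fun h => hv ⟨hx.1.trans hxuv.2, h⟩
  rcases le_or_gt w p with hwp | hpw
  · exact Or.inr fun y hy => ⟨hwp.trans_lt hy.1, hy.2.trans_le hqv⟩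
  · have hqw : q ≤ w := not_lt.1 fun h => hw ⟨hpw, h⟩
    exact Or.inl fun y hy => ⟨hup.trans_lt hy.1, hy.2.trans_le hqw⟩

lemma Regulated.exists_ball {f : ℝ → ℝ} (hf : Regulated f a b) {t : ℝ} (ht : t ∈ Icc a b)
    {ε : ℝ} (hε : 0 < ε) : ∃ r > 0, ∃ L R : ℝ, (∀ x ∈ Metric.ball t r ∩ Ico a t, |f x - L| < ε) ∧
      ∀ x ∈ Metric.ball t r ∩ Ioc t b, |f x - R| < ε := by
  have hleft : ∃ L, ∀ᶠ x in 𝓝[Ico a t] t, |f x - L| < ε := by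
    by_cases hat : a < t
    · obtain ⟨L, hL⟩ := hf.1 t ⟨hat, ht.2⟩
      exact ⟨L, by simpa [Real.dist_eq] using Metric.tendsto_nhds.1 hL ε hε⟩
    · exact ⟨0, by simp [Ico_eq_empty hat]⟩
  have hright : ∃ R, ∀ᶠ x in 𝓝[Ioc t b] t, |f x - R| < ε := by
    by_cases htb : t < b
    · obtain ⟨R, hR⟩ := hf.2 t ⟨ht.1, htb⟩
      exact ⟨R, by simpa [Real.dist_eq] using Metric.tendsto_nhds.1 hR ε hε⟩
    · exact ⟨0, by simp [Ioc_eq_empty htb]⟩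
  obtain ⟨L, r₁, hr₁, h₁⟩ := hleft.imp fun L hL => Metric.mem_nhdsWithin_iff.1 hL
  obtain ⟨R, r₂, hr₂, h₂⟩ := hright.imp fun R hR => Metric.mem_nhdsWithin_iff.1 hR
  exact ⟨min r₁ r₂, lt_min hr₁ hr₂, L, R,
    fun x hx => h₁ ⟨Metric.ball_subset_ball (min_le_left _ _) hx.1, hx.2⟩,
    fun x hx => h₂ ⟨Metric.ball_subset_ball (min_le_right _ _) hx.1, hx.2⟩⟩

/-- Cover `[a,b]` by finitely many balls on whose two halves `f` is nearly constant, and divide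
at their centres and endpoints. -/
theorem Regulated.exists_partition {f : ℝ → ℝ} (hf : Regulated f a b) (hab : a < b) {ε : ℝ}
    (hε : 0 < ε) : ∃ P : TaggedPartition a b,
      ∀ j < P.n, ∀ x ∈ Ioo (P.pts j) (P.pts (j + 1)), |f x - f (P.tag j)| ≤ ε := by
  choose! r hr L R hL hR using fun t (ht : t ∈ Icc a b) => hf.exists_ball ht (half_pos hε)
  obtain ⟨T, hT, hcover⟩ := isCompact_Icc.elim_nhds_subcover (fun t => Metric.ball t (r t))
    fun t ht => Metric.ball_mem_nhds t (hr t ht)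
  set E := T ∪ T.image (fun t => t - r t) ∪ T.image (fun t => t + r t)
  obtain ⟨P, hPE, hPint⟩ := exists_refines_interiorTags hab (F := E.filter (· ∈ Icc a b))
    fun x hx => (Finset.mem_filter.1 hx).2
  refine ⟨P, fun j hj x hx => ?_⟩
  have hgap : Ioo (P.pts j) (P.pts (j + 1)) ⊆ Icc a b :=
    Ioo_subset_Icc_self.trans (Icc_subset_Icc (P.pts_mem hj.le).1 (P.pts_mem hj).2)
  have hE : ∀ z ∈ E, z ∉ Ioo (P.pts j) (P.pts (j + 1)) := fun z hz hzj => by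
    obtain ⟨i, hi, rfl⟩ := hPE z (Finset.mem_filter.2 ⟨hz, hgap hzj⟩)
    exact P.pts_notMem_Ioo hi hj hzj
  obtain ⟨t, htT, hxt⟩ := mem_iUnion₂.1 (hcover (hgap hx))
  have ht := hT t htT
  have hclose : ∀ M, (∀ y ∈ Ioo (P.pts j) (P.pts (j + 1)), |f y - M| < ε / 2) →
      |f x - f (P.tag j)| ≤ ε := fun M hM => by
    have h₁ := hM x hx
    have h₂ := hM _ (hPint j hj)
    rw [abs_lt] at h₁ h₂
    rw [abs_le]
    constructor <;> linarith
  rw [Real.ball_eq_Ioo] at hxt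
  rcases Ioo_subset_Ioo_or_of_notMem hx hxt
    (hE _ (Finset.mem_union_left _ (Finset.mem_union_right _ (Finset.mem_image_of_mem _ htT))))
    (hE _ (Finset.mem_union_left _ (Finset.mem_union_left _ htT)))
    (hE _ (Finset.mem_union_right _ (Finset.mem_image_of_mem _ htT))) with h | h
  · refine hclose (L t) fun y hy => hL t ht y ⟨?_, (hgap hy).1, (h hy).2⟩
    rw [Real.ball_eq_Ioo]
    exact ⟨(h hy).1, (h hy).2.trans (by linarith [hr t ht])⟩
  · refine hclose (R t) fun y hy => hR t ht y ⟨?_, (h hy).1, (hgap hy).2⟩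
    rw [Real.ball_eq_Ioo]
    exact ⟨(by linarith [hr t ht] : t - r t < t).trans (h hy).1, (h hy).2⟩

end StepFunctions

/-- for regulated `f` and regulated `g` of bounded variation,
both `(K)∫_a^b f dg` and `(D)∫_a^b g df` exist and
`(K)∫_a^b f dg = f(b)g(b) − f(a)g(a) − (D)∫_a^b g df`. -/
theorem stmt17 (a b : ℝ) (hab : a < b) (f g : ℝ → ℝ)
    (hf : Regulated f a b) (hg : Regulated g a b)
    (hgbv : BoundedVariationOn g (Set.Icc a b)) :
    ∃ K D : ℝ, HasKS f g a b K ∧ HasDushnik g f a b D ∧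
      K = f b * g b - f a * g a - D := by
  choose P hP using fun n : ℕ => hf.exists_partition hab (Nat.one_div_pos_of_nat (n := n))
  exact IntegratesByParts.of_abs_sub_le hab hgbv (fun n => (P n).step_mem f hg)
    (fun n x hx => (P n).abs_sub_step_le f (by positivity) (hP n) hx)
    tendsto_one_div_add_atTop_nhds_zero_nat
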